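/- arXiv:1310.7656 — 2 statements merged into one kernel-verified Lean document; each statement's English description precedes it below -/
import Mathlib

section
/- Let Λ be a finitely aligned k-graph, let c be a T-valued 2-cocycle on Λ, let Ε ⊆ FE(Λ) be satiated, let t be a relative Cuntz–Krieger (Λ,c;Ε)-family in a C*-algebra, and let I be a closed two-sided ideal of C*(t). Set H_I := {v ∈ Λ^0 : t_v ∈ I}. Then for every E ∈ Ε with r(E) ∉ H_I, we have Δ(t)^{E \ EH_I} ∈ I; that is, Ε_{H_I} := {E \ EH_I : E ∈ Ε, r(E) ∉ H_I} is contained in {F ∈ FE(Λ \ ΛH_I) : Δ(t)^F ∈ I}. -/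
open scoped BigOperators

/-- A `k`-graph: a countable category with degree functor `d : Λ → ℕ^k`
satisfying the factorisation property.  Composition `comp μ ν` is only
meaningful when `s μ = r ν`. -/
structure KGraph (k : ℕ) where
  Path : Type
  countable : Countable Path
  r : Path → Path
  s : Path → Path
  d : Path → (Fin k → ℕ)
  comp : Path → Path → Path
  d_r : ∀ l, d (r l) = 0
  d_s : ∀ l, d (s l) = 0
  r_of_vertex : ∀ v, d v = 0 → r v = v
  s_of_vertex : ∀ v, d v = 0 → s v = v
  id_comp : ∀ l, comp (r l) l = l
  comp_id : ∀ l, comp l (s l) = l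
  r_comp : ∀ μ ν, s μ = r ν → r (comp μ ν) = r μ
  s_comp : ∀ μ ν, s μ = r ν → s (comp μ ν) = s ν
  d_comp : ∀ μ ν, s μ = r ν → d (comp μ ν) = d μ + d ν
  comp_assoc : ∀ l μ ν, s l = r μ → s μ = r ν →
    comp (comp l μ) ν = comp l (comp μ ν)
  factor : ∀ (l : Path) (m n : Fin k → ℕ), d l = m + n →
    ∃! p : Path × Path, d p.1 = m ∧ d p.2 = n ∧ s p.1 = r p.2 ∧ comp p.1 p.2 = l

namespace KGraph

variable {k : ℕ} (G : KGraph k)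

def IsVertex (v : G.Path) : Prop := G.d v = 0

/-- `MCE μ ν = μΛ ∩ νΛ ∩ Λ^{d μ ⊔ d ν}`. -/
def MCE (μ ν : G.Path) : Set G.Path :=
  {l | G.d l = G.d μ ⊔ G.d ν ∧
      (∃ α, G.s μ = G.r α ∧ G.comp μ α = l) ∧
      (∃ β, G.s ν = G.r β ∧ G.comp ν β = l)}

def FinitelyAligned : Prop := ∀ μ ν : G.Path, (G.MCE μ ν).Finite

/-- `Ext(μ; E) = ⋃_{ν ∈ E} {α : μα ∈ MCE(μ,ν)}`. -/
def Ext (μ : G.Path) (E : Set G.Path) : Set G.Path :=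
  {α | G.s μ = G.r α ∧ ∃ ν ∈ E, G.comp μ α ∈ G.MCE μ ν}

/-- `Ext` computed relative to a sub-`k`-graph with path set `W`. -/
def ExtIn (W : Set G.Path) (μ : G.Path) (E : Set G.Path) : Set G.Path :=
  {α | G.s μ = G.r α ∧ ∃ ν ∈ E, G.comp μ α ∈ G.MCE μ ν ∩ W}

/-- `E` is exhaustive at `v` relative to the sub-`k`-graph with path set `W`. -/
def ExhaustiveIn (W : Set G.Path) (v : G.Path) (E : Set G.Path) : Prop :=
  ∀ l ∈ W, G.r l = v → ∃ μ ∈ E, (G.MCE l μ ∩ W).Nonempty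

def Exhaustive (v : G.Path) (E : Set G.Path) : Prop := G.ExhaustiveIn Set.univ v E

/-- Membership in `FE` of the sub-`k`-graph with path set `W`. -/
def IsFEIn (W : Set G.Path) (E : Set G.Path) : Prop :=
  E.Finite ∧ E ⊆ W ∧ (∀ μ ∈ E, ¬ G.IsVertex μ) ∧
    ∃ v, G.IsVertex v ∧ (∀ μ ∈ E, G.r μ = v) ∧ G.ExhaustiveIn W v E

def IsFE (E : Set G.Path) : Prop := G.IsFEIn Set.univ E

/-- A satiated collection of finite exhaustive sets, relative to the sub-`k`-graph `W`. -/
def SatiatedIn (W : Set G.Path) (Ε : Set (Set G.Path)) : Prop :=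
  (∀ E ∈ Ε, G.IsFEIn W E) ∧
  ∀ F ∈ Ε, ∀ v, G.IsVertex v → (∀ μ ∈ F, G.r μ = v) →
    ((∀ l ∈ W, G.r l = v → l ≠ v → insert l F ∈ Ε) ∧
     (∀ l ∈ W, G.r l = v →
        (¬ ∃ μ ∈ F, ∃ μ', G.s μ = G.r μ' ∧ G.comp μ μ' = l) →
        G.ExtIn W l F ∈ Ε) ∧
     (∀ lam lam', lam ∈ F → G.s lam = G.r lam' → G.comp lam lam' ∈ F →
        lam' ≠ G.s lam → F \ {G.comp lam lam'} ∈ Ε) ∧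
     (∀ lam ∈ F, ∀ Gs ∈ Ε, (∀ μ ∈ Gs, G.r μ = G.s lam) →
        ((F \ {lam}) ∪ (G.comp lam) '' Gs) ∈ Ε))

def Satiated (Ε : Set (Set G.Path)) : Prop := G.SatiatedIn Set.univ Ε

end KGraph

/-- A normalised `𝕋`-valued categorical `2`-cocycle on a `k`-graph, with the
circle realised as the norm-one complex numbers. -/
structure KGraph.Cocycle {k : ℕ} (G : KGraph k) where
  c : G.Path → G.Path → ℂ
  norm_one : ∀ μ ν, G.s μ = G.r ν → ‖c μ ν‖ = 1
  cocycle : ∀ l μ ν, G.s l = G.r μ → G.s μ = G.r ν →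
    c l μ * c (G.comp l μ) ν = c μ ν * c l (G.comp μ ν)
  left_id : ∀ l, c (G.r l) l = 1
  right_id : ∀ l, c l (G.s l) = 1

namespace KGraph

variable {k : ℕ} (G : KGraph k)

section CStar

variable {A : Type*} [NonUnitalNormedRing A] [StarRing A] [CStarRing A]
  [NormedSpace ℂ A] [IsScalarTower ℂ A A] [SMulCommClass ℂ A A]
  [StarModule ℂ A] [CompleteSpace A]

/-- Toeplitz–Cuntz–Krieger `(Λ, c)`-family. -/
def IsTCK (σ : G.Cocycle) (t : G.Path → A) : Prop :=
  (∀ v, G.IsVertex v → star (t v) = t v ∧ t v * t v = t v) ∧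
  (∀ v w, G.IsVertex v → G.IsVertex w → v ≠ w → t v * t w = 0) ∧
  (∀ μ ν, G.s μ = G.r ν → t μ * t ν = σ.c μ ν • t (G.comp μ ν)) ∧
  (∀ l, star (t l) * t l = t (G.s l)) ∧
  (∀ μ ν (F : Finset G.Path), (F : Set G.Path) = G.MCE μ ν →
    (t μ * star (t μ)) * (t ν * star (t ν)) = ∑ l ∈ F, t l * star (t l))

open scoped Classical in
/-- `Δ(t)^F = ∏_{l ∈ F} (q_v - q_l)`; the factors commute for a TCK family, so the
`noncommProd` below is the product from the paper.  The product is computed in the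
unitization (with a harmless prefactor `q_v`, which acts as the identity on each
factor for a TCK family with `F ⊆ vΛ`), so that the empty product is `q_v`. -/
noncomputable def Delta (t : G.Path → A) (v : G.Path) (F : Finset G.Path) : A :=
  if h : (F : Set G.Path).Pairwise (Function.onFun Commute fun l =>
      ((t v * star (t v) - t l * star (t l) : A) : Unitization ℂ A))
  then (((t v * star (t v) : A) : Unitization ℂ A) *
      F.noncommProd (fun l => ((t v * star (t v) - t l * star (t l) : A) : Unitization ℂ A)) h).snd
  else 0

/-- Relative Cuntz–Krieger `(Λ, c; Ε)`-family. -/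
def IsRelCK (σ : G.Cocycle) (Ε : Set (Set G.Path)) (t : G.Path → A) : Prop :=
  G.IsTCK σ t ∧ ∀ (F : Finset G.Path) (v : G.Path), (F : Set G.Path) ∈ Ε →
    G.IsVertex v → (∀ μ ∈ F, G.r μ = v) → G.Delta t v F = 0

/-- Cuntz–Krieger `(Λ, c)`-family (finitely aligned case). -/
def IsCK (σ : G.Cocycle) (t : G.Path → A) : Prop :=
  G.IsRelCK σ {E | G.IsFE E} t

/-- The `C*`-subalgebra of `A` generated by a family `t`, as a subset of `A`. -/
def cstarOf (t : G.Path → A) : Set A :=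
  closure (↑(NonUnitalStarAlgebra.adjoin ℂ (Set.range t)) : Set A)

end CStar

/-- Row-finite with no sources: every `vΛ^n` is finite and nonempty. -/
def RowFiniteNoSources : Prop :=
  ∀ v, G.IsVertex v → ∀ n : Fin k → ℕ,
    {l | G.r l = v ∧ G.d l = n}.Finite ∧ {l | G.r l = v ∧ G.d l = n}.Nonempty

section CStar2

variable {A : Type*} [NonUnitalNormedRing A] [StarRing A] [CStarRing A]
  [NormedSpace ℂ A] [IsScalarTower ℂ A A] [SMulCommClass ℂ A A]
  [StarModule ℂ A] [CompleteSpace A]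

/-- Cuntz–Krieger family, row-finite no sources formulation:
`∑_{λ ∈ vΛ^n} t_λ t_λ* = t_v`. -/
def IsCKrf (σ : G.Cocycle) (t : G.Path → A) : Prop :=
  G.IsTCK σ t ∧ ∀ v (n : Fin k → ℕ) (F : Finset G.Path), G.IsVertex v →
    (F : Set G.Path) = {l | G.r l = v ∧ G.d l = n} →
    ∑ l ∈ F, t l * star (t l) = t v

end CStar2

/-- A filter in a `k`-graph. -/
def IsFilter (S : Set G.Path) : Prop :=
  (∀ l, (∃ α, G.s l = G.r α ∧ G.comp l α ∈ S) → l ∈ S) ∧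
  (∀ μ ∈ S, ∀ ν ∈ S, (G.MCE μ ν ∩ S).Nonempty)

/-- An ultrafilter: a filter meeting every `Λ^n`. -/
def IsUltrafilter (S : Set G.Path) : Prop :=
  G.IsFilter S ∧ ∀ n : Fin k → ℕ, ∃ l ∈ S, G.d l = n

/-- `ℓ_μ(S) = {ν : νΛ ∩ μS ≠ ∅}`. -/
def lmap (μ : G.Path) (S : Set G.Path) : Set G.Path :=
  {ν | ∃ τ ∈ S, G.s μ = G.r τ ∧ ∃ α, G.s ν = G.r α ∧ G.comp ν α = G.comp μ τ}

/-- `μ ∼ ν`: `ℓ_μ(S) = ℓ_ν(S)` for every ultrafilter `S` with `r(S) = s(μ)`. -/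
def PEquiv (μ ν : G.Path) : Prop :=
  ∀ S, G.IsUltrafilter S → G.s μ ∈ S → G.lmap μ S = G.lmap ν S

/-- `d` with values in `ℤ^k`. -/
def dZ (l : G.Path) : Fin k → ℤ := fun i => (G.d l i : ℤ)

/-- `Per(Λ) ≤ ℤ^k`, generated by `{d(μ) - d(ν) : μ ∼ ν}`. -/
def PerGroup : AddSubgroup (Fin k → ℤ) :=
  AddSubgroup.closure
    {m | ∃ μ ν, G.s μ = G.s ν ∧ G.PEquiv μ ν ∧ m = G.dZ μ - G.dZ ν}

/-- The hereditary set `H_Per`. -/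
def HPer : Set G.Path :=
  {v | G.IsVertex v ∧ ∀ m n : Fin k → ℕ,
    ((fun i => (m i : ℤ)) - fun i => (n i : ℤ)) ∈ G.PerGroup →
    ∀ l, G.r l = v → G.d l = m →
      ∃ μ, G.r μ = v ∧ G.d μ = n ∧ G.s μ = G.s l ∧ G.PEquiv l μ}

end KGraph


/-!
The range projections `q_λ = t_λ t_λ*` of a Toeplitz–Cuntz–Krieger family commute (by (TCK4) and
the symmetry of `MCE`), so `Δ(t)` is multiplicative over disjoint unions and
`0 = Δ(t)^E = Δ(t)^{E \ EH_I} Δ(t)^{EH_I}`. For `s(μ) ∈ H_I` we have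
`q_μ = t_μ t_{s(μ)} t_μ* ∈ I`, so every factor `q_v - q_μ` of `Δ(t)^{EH_I}` is `q_v` modulo `I`,
whence `q_v - Δ(t)^{EH_I} ∈ I`. Finally
`Δ(t)^{E \ EH_I} = Δ(t)^{E \ EH_I} (q_v - Δ(t)^{EH_I}) ∈ I`.
-/

namespace KGraph

open Finset

variable {k : ℕ} {G : KGraph k}

theorem MCE_comm (μ ν : G.Path) : G.MCE μ ν = G.MCE ν μ := by
  ext l
  constructor <;> rintro ⟨hd, hμ, hν⟩ <;> exact ⟨by rw [hd, sup_comm], hν, hμ⟩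

variable {A : Type*} [NonUnitalNormedRing A] [StarRing A] [NormedSpace ℂ A]
  {σ : G.Cocycle} {t : G.Path → A}

theorem IsTCK.rangeProj_commute (ht : G.IsTCK σ t) (hFA : G.FinitelyAligned) (μ ν : G.Path) :
    Commute (t μ * star (t μ)) (t ν * star (t ν)) := by
  have hμν := ht.2.2.2.2 μ ν (hFA μ ν).toFinset (hFA μ ν).coe_toFinset
  have hνμ := ht.2.2.2.2 ν μ (hFA μ ν).toFinset (by rw [(hFA μ ν).coe_toFinset, MCE_comm])
  exact hμν.trans hνμ.symm

theorem IsTCK.vertex_mul (ht : G.IsTCK σ t) {v μ : G.Path} (hv : G.IsVertex v) (hμ : G.r μ = v) :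
    t v * t μ = t μ := by
  subst hμ
  rw [ht.2.2.1 _ μ (G.s_of_vertex _ hv), G.id_comp, σ.left_id, one_smul]

theorem IsTCK.mul_source (ht : G.IsTCK σ t) (μ : G.Path) : t μ * t (G.s μ) = t μ := by
  rw [ht.2.2.1 μ _ (G.r_of_vertex _ (G.d_s μ)).symm, G.comp_id, σ.right_id, one_smul]

theorem IsTCK.rangeProj_vertex (ht : G.IsTCK σ t) {v : G.Path} (hv : G.IsVertex v) :
    t v * star (t v) = t v := by
  rw [(ht.1 v hv).1, (ht.1 v hv).2]

theorem IsTCK.vertex_mul_rangeProj (ht : G.IsTCK σ t) {v μ : G.Path} (hv : G.IsVertex v)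
    (hμ : G.r μ = v) : t v * star (t v) * (t μ * star (t μ)) = t μ * star (t μ) := by
  rw [ht.rangeProj_vertex hv, ← mul_assoc, ht.vertex_mul hv hμ]

theorem IsTCK.rangeProj_mul_vertex (ht : G.IsTCK σ t) {v μ : G.Path} (hv : G.IsVertex v)
    (hμ : G.r μ = v) : t μ * star (t μ) * (t v * star (t v)) = t μ * star (t μ) := by
  simpa only [star_mul, star_star, mul_assoc] using congrArg star (ht.vertex_mul_rangeProj hv hμ)

theorem commute_coe_sub_rangeProj
    (hcomm : ∀ μ ν, Commute (t μ * star (t μ)) (t ν * star (t ν))) (v μ ν : G.Path) :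
    Commute ((t v * star (t v) - t μ * star (t μ) : A) : Unitization ℂ A)
      ((t v * star (t v) - t ν * star (t ν) : A) : Unitization ℂ A) :=
  (((hcomm v v).sub_right (hcomm v ν)).sub_left ((hcomm μ v).sub_right (hcomm μ ν))).map
    (Unitization.inrNonUnitalAlgHom ℂ A)

theorem pairwise_commute_coe_sub_rangeProj
    (hcomm : ∀ μ ν, Commute (t μ * star (t μ)) (t ν * star (t ν))) (v : G.Path)
    (S : Set G.Path) :
    S.Pairwise (Function.onFun Commute fun l =>
      ((t v * star (t v) - t l * star (t l) : A) : Unitization ℂ A)) :=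
  fun μ _ ν _ _ => commute_coe_sub_rangeProj hcomm v μ ν

variable [IsScalarTower ℂ A A] [SMulCommClass ℂ A A]

theorem coe_Delta (hcomm : ∀ μ ν, Commute (t μ * star (t μ)) (t ν * star (t ν)))
    (v : G.Path) (S : Finset G.Path) :
    ((G.Delta t v S : A) : Unitization ℂ A) = ((t v * star (t v) : A) : Unitization ℂ A) *
      S.noncommProd (fun l => ((t v * star (t v) - t l * star (t l) : A) : Unitization ℂ A))
        (pairwise_commute_coe_sub_rangeProj hcomm v S) := by
  rw [Delta, dif_pos (pairwise_commute_coe_sub_rangeProj hcomm v S)]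
  exact Unitization.ext (by simp [Unitization.fst_mul]) rfl

theorem Delta_empty (hcomm : ∀ μ ν, Commute (t μ * star (t μ)) (t ν * star (t ν)))
    (v : G.Path) : G.Delta t v ∅ = t v * star (t v) :=
  Unitization.inr_injective (R := ℂ) (by rw [coe_Delta hcomm, noncommProd_empty, mul_one])

theorem Delta_insert [DecidableEq G.Path]
    (hcomm : ∀ μ ν, Commute (t μ * star (t μ)) (t ν * star (t ν)))
    {v l : G.Path} {S : Finset G.Path} (hl : l ∉ S) :
    G.Delta t v (insert l S) = G.Delta t v S * (t v * star (t v) - t l * star (t l)) := by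
  apply Unitization.inr_injective (R := ℂ)
  rw [Unitization.inr_mul, coe_Delta hcomm, coe_Delta hcomm,
    noncommProd_insert_of_notMem _ _ _ _ hl, mul_assoc,
    (noncommProd_commute _ _ _ _ fun μ _ => commute_coe_sub_rangeProj hcomm v l μ).eq]

theorem IsTCK.Delta_mul_rangeProj_vertex (ht : G.IsTCK σ t) (hFA : G.FinitelyAligned)
    {v : G.Path} (hv : G.IsVertex v) {S : Finset G.Path} (hS : ∀ μ ∈ S, G.r μ = v) :
    G.Delta t v S * (t v * star (t v)) = G.Delta t v S := by
  classical
  have hvv := ht.vertex_mul_rangeProj hv (G.r_of_vertex v hv)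
  induction S using Finset.induction_on with
  | empty => rw [Delta_empty (ht.rangeProj_commute hFA), hvv]
  | insert l S hl _ =>
    rw [Delta_insert (ht.rangeProj_commute hFA) hl, mul_assoc, sub_mul, hvv,
      ht.rangeProj_mul_vertex hv (hS l (mem_insert_self l S))]

theorem IsTCK.Delta_union [DecidableEq G.Path] (ht : G.IsTCK σ t) (hFA : G.FinitelyAligned)
    {v : G.Path} (hv : G.IsVertex v) {S T : Finset G.Path} (hS : ∀ μ ∈ S, G.r μ = v)
    (hST : Disjoint S T) :
    G.Delta t v (S ∪ T) = G.Delta t v S * G.Delta t v T := by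
  have hcomm := ht.rangeProj_commute hFA
  induction T using Finset.induction_on with
  | empty => rw [union_empty, Delta_empty hcomm, ht.Delta_mul_rangeProj_vertex hFA hv hS]
  | insert l T hl ih =>
    have hlS : l ∉ S := disjoint_right.mp hST (mem_insert_self l T)
    rw [union_insert, Delta_insert hcomm (by simp [hlS, hl]),
      ih (hST.mono_right (subset_insert l T)), Delta_insert hcomm hl, mul_assoc]

variable [StarModule ℂ A] {I : Submodule ℂ A}

theorem rangeProj_mem_adjoin (l : G.Path) :
    t l * star (t l) ∈ NonUnitalStarAlgebra.adjoin ℂ (Set.range t) :=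
  have h := NonUnitalStarAlgebra.subset_adjoin ℂ (Set.range t) ⟨l, rfl⟩
  mul_mem h (star_mem h)

theorem Delta_mem_adjoin (hcomm : ∀ μ ν, Commute (t μ * star (t μ)) (t ν * star (t ν)))
    (v : G.Path) (S : Finset G.Path) :
    G.Delta t v S ∈ NonUnitalStarAlgebra.adjoin ℂ (Set.range t) := by
  classical
  induction S using Finset.induction_on with
  | empty => rw [Delta_empty hcomm]; exact rangeProj_mem_adjoin v
  | insert l S hl ih =>
    rw [Delta_insert hcomm hl]
    exact mul_mem ih (sub_mem (rangeProj_mem_adjoin v) (rangeProj_mem_adjoin l))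

theorem IsTCK.rangeProj_mem_of_source_mem (ht : G.IsTCK σ t)
    (hI : ∀ x ∈ G.cstarOf t, ∀ y ∈ I, x * y ∈ I ∧ y * x ∈ I) {μ : G.Path}
    (hμ : t (G.s μ) ∈ I) : t μ * star (t μ) ∈ I := by
  have htμ := NonUnitalStarAlgebra.subset_adjoin ℂ (Set.range t) ⟨μ, rfl⟩
  rw [show t μ * star (t μ) = t μ * (t (G.s μ) * star (t μ)) by rw [← mul_assoc, ht.mul_source]]
  exact (hI _ (subset_closure htμ) _ (hI _ (subset_closure (star_mem htμ)) _ hμ).2).1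

theorem IsTCK.vertex_sub_Delta_mem (ht : G.IsTCK σ t) (hFA : G.FinitelyAligned)
    (hI : ∀ x ∈ G.cstarOf t, ∀ y ∈ I, x * y ∈ I ∧ y * x ∈ I) {v : G.Path} (hv : G.IsVertex v)
    {S : Finset G.Path} (hS : ∀ μ ∈ S, G.r μ = v) (hSI : ∀ μ ∈ S, t (G.s μ) ∈ I) :
    t v * star (t v) - G.Delta t v S ∈ I := by
  classical
  have hcomm := ht.rangeProj_commute hFA
  induction S using Finset.induction_on with
  | empty => rw [Delta_empty hcomm, sub_self]; exact zero_mem I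
  | insert l S hl ih =>
    have hS' : ∀ μ ∈ S, G.r μ = v := fun μ h => hS μ (mem_insert_of_mem h)
    have hsplit : t v * star (t v) - G.Delta t v (insert l S) =
        (t v * star (t v) - G.Delta t v S) + G.Delta t v S * (t l * star (t l)) := by
      rw [Delta_insert hcomm hl, mul_sub, ht.Delta_mul_rangeProj_vertex hFA hv hS']
      abel
    rw [hsplit]
    refine add_mem (ih hS' fun μ h => hSI μ (mem_insert_of_mem h)) ?_
    exact (hI _ (subset_closure (Delta_mem_adjoin hcomm v S)) _
      (ht.rangeProj_mem_of_source_mem hI (hSI l (mem_insert_self l S)))).1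

end KGraph

theorem stmt11_general {k : ℕ} (G : KGraph k) (hFA : G.FinitelyAligned) (σ : G.Cocycle)
    {A : Type*} [NonUnitalNormedRing A] [StarRing A]
    [NormedSpace ℂ A] [IsScalarTower ℂ A A] [SMulCommClass ℂ A A]
    [StarModule ℂ A]
    (Ε : Set (Set G.Path))
    (t : G.Path → A) (ht : G.IsRelCK σ Ε t)
    (I : Submodule ℂ A)
    (hIabs : ∀ x ∈ G.cstarOf t, ∀ y ∈ I, x * y ∈ I ∧ y * x ∈ I) :
    ∀ HI : Set G.Path, HI = {w | G.IsVertex w ∧ t w ∈ I} →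
      ∀ (E : Finset G.Path) (v : G.Path), (E : Set G.Path) ∈ Ε → G.IsVertex v →
        (∀ μ ∈ E, G.r μ = v) → v ∉ HI →
        ∀ F : Finset G.Path,
          (F : Set G.Path) = {μ ∈ (E : Set G.Path) | G.s μ ∉ HI} →
          G.Delta t v F ∈ I := by
  classical
  rintro HI rfl E v hE hv hr - F hF
  obtain ⟨hTCK, hRel⟩ := ht
  have hmemF : ∀ μ, μ ∈ F ↔ μ ∈ E ∧ ¬(G.IsVertex (G.s μ) ∧ t (G.s μ) ∈ I) := fun μ =>
    Set.ext_iff.mp hF μ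
  have hFE : F ⊆ E := fun μ hμ => ((hmemF μ).mp hμ).1
  have hrF : ∀ μ ∈ F, G.r μ = v := fun μ h => hr μ (hFE h)
  have hsource : ∀ μ ∈ E \ F, t (G.s μ) ∈ I := fun μ hμ => by
    obtain ⟨hμE, hμF⟩ := Finset.mem_sdiff.mp hμ
    by_contra h
    exact hμF ((hmemF μ).mpr ⟨hμE, fun h' => h h'.2⟩)
  have hfactor : G.Delta t v F * G.Delta t v (E \ F) = 0 := by
    rw [← hTCK.Delta_union hFA hv hrF Finset.disjoint_sdiff, Finset.union_sdiff_of_subset hFE]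
    exact hRel E v hE hv hr
  have hDelta : G.Delta t v F = G.Delta t v F * (t v * star (t v) - G.Delta t v (E \ F)) := by
    rw [mul_sub, hfactor, sub_zero, hTCK.Delta_mul_rangeProj_vertex hFA hv hrF]
  rw [hDelta]
  exact (hIabs _ (subset_closure (KGraph.Delta_mem_adjoin (hTCK.rangeProj_commute hFA) v F)) _
    (hTCK.vertex_sub_Delta_mem hFA hIabs hv (fun μ h => hr μ (Finset.mem_sdiff.mp h).1)
      hsource)).1

/-- `Ε_{H_I} ⊆ B_I`: for `E ∈ Ε` with `r E ∉ H_I`,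
`Δ(t)^{E \\ EH_I} ∈ I`. -/
theorem stmt11 {k : ℕ} (G : KGraph k) (hFA : G.FinitelyAligned) (σ : G.Cocycle)
    {A : Type*} [NonUnitalNormedRing A] [StarRing A] [CStarRing A]
    [NormedSpace ℂ A] [IsScalarTower ℂ A A] [SMulCommClass ℂ A A]
    [StarModule ℂ A] [CompleteSpace A]
    (Ε : Set (Set G.Path)) (hΕ : G.Satiated Ε)
    (t : G.Path → A) (ht : G.IsRelCK σ Ε t)
    (I : Submodule ℂ A) (hIclosed : IsClosed (I : Set A))
    (hIsub : (I : Set A) ⊆ G.cstarOf t)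
    (hIabs : ∀ x ∈ G.cstarOf t, ∀ y ∈ I, x * y ∈ I ∧ y * x ∈ I) :
    ∀ HI : Set G.Path, HI = {w | G.IsVertex w ∧ t w ∈ I} →
      ∀ (E : Finset G.Path) (v : G.Path), (E : Set G.Path) ∈ Ε → G.IsVertex v →
        (∀ μ ∈ E, G.r μ = v) → v ∉ HI →
        ∀ F : Finset G.Path,
          (F : Set G.Path) = {μ ∈ (E : Set G.Path) | G.s μ ∉ HI} →
          G.Delta t v F ∈ I :=
  stmt11_general G hFA σ Ε t ht I hIabs
end

section
/- Let Λ be a finitely aligned k-graph, let b : Λ^0 → ℤ^k satisfy d(λ) = b(s(λ)) − b(r(λ)) for all λ ∈ Λ, let c be a T-valued 2-cocycle on Λ, and let t be a Toeplitz–Cuntz–Krieger (Λ,c)-family in a C*-algebra with t_v ≠ 0 for every v ∈ Λ^0. Fix n ∈ ℤ^k. Then the elements {t_μ t_ν* : μ, ν ∈ Λ, s(μ) = s(ν), b(s(μ)) = n} are nonzero matrix units: each t_μ t_ν* ≠ 0, and for μ, ν, η, ζ with s(μ) = s(ν), s(η) = s(ζ) and b(s(μ)) = b(s(η)) = n, one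 has (t_μ t_ν*)(t_η t_ζ*) = t_μ t_ζ* if ν = η and (t_μ t_ν*)(t_η t_ζ*) = 0 if ν ≠ η. -/
open scoped BigOperators

/-!
The grading `b` rules out common extensions: if `να = ηβ` with `b(s ν) = b(s η)`, then
`d α = b(s(να)) - b(s ν) = d β`, so `d ν = d η`; minimality of `να ∈ MCE(ν, η)` then forces
`d α = d β = 0`, i.e. `ν = να = η`. So for `ν ≠ η` the relation (TCK4) reads `q_ν q_η = 0`,
whence `t_ν* t_η = t_ν* q_ν q_η t_η = 0`. The matrix-unit relations follow, and nonvanishing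
comes from the C*-identity: `(t_μ t_ν*)* (t_μ t_ν*) = t_ν t_ν*`, which is zero only if `t_ν` is.
-/

namespace KGraph

variable {k : ℕ} {G : KGraph k}

theorem s_eq_r_s (l : G.Path) : G.s l = G.r (G.s l) :=
  (G.r_of_vertex _ (G.d_s l)).symm

theorem comp_eq_self_of_d_eq_zero {μ α : G.Path} (h : G.s μ = G.r α) (hα : G.d α = 0) :
    G.comp μ α = μ := by
  rw [← G.r_of_vertex α hα, ← h, G.comp_id]

theorem d_eq_of_dZ_eq {μ ν : G.Path} (h : G.dZ μ = G.dZ ν) : G.d μ = G.d ν :=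
  funext fun i => Nat.cast_injective (congrFun h i)

section Grading

variable {b : G.Path → (Fin k → ℤ)} (hb : ∀ l : G.Path, G.dZ l = b (G.s l) - b (G.r l))
include hb

theorem d_eq_of_comp_eq_comp {ν η α β : G.Path} (hα : G.s ν = G.r α) (hβ : G.s η = G.r β)
    (hνη : b (G.s ν) = b (G.s η)) (h : G.comp ν α = G.comp η β) : G.d ν = G.d η := by
  have hαβ : G.d α = G.d β := d_eq_of_dZ_eq <| by
    rw [hb α, hb β, ← hα, ← hβ, ← G.s_comp ν α hα, ← G.s_comp η β hβ, h, hνη]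
  have := G.d_comp ν α hα
  rw [h, G.d_comp η β hβ, hαβ] at this
  exact (add_right_cancel this).symm

theorem MCE_eq_empty_of_grading {ν η : G.Path} (hνη : b (G.s ν) = b (G.s η)) (hne : ν ≠ η) :
    G.MCE ν η = ∅ := by
  refine Set.eq_empty_of_forall_notMem ?_
  rintro l ⟨hd, ⟨α, hα, rfl⟩, ⟨β, hβ, hβl⟩⟩
  have hdeg : G.d ν = G.d η := d_eq_of_comp_eq_comp hb hα hβ hνη hβl.symm
  rw [hdeg, sup_idem] at hd
  have hα0 : G.d α = 0 := by
    have := G.d_comp ν α hα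
    rw [hd, hdeg] at this
    exact left_eq_add.mp this
  have hβ0 : G.d β = 0 := by
    have := G.d_comp η β hβ
    rw [hβl, hd] at this
    exact left_eq_add.mp this
  apply hne
  rw [← comp_eq_self_of_d_eq_zero hα hα0, ← comp_eq_self_of_d_eq_zero hβ hβ0, hβl]

end Grading

namespace IsTCK

variable {A : Type*} [NonUnitalNormedRing A] [StarRing A] [NormedSpace ℂ A]
  {σ : G.Cocycle} {t : G.Path → A} (ht : G.IsTCK σ t)
include ht

theorem mul_t_s (l : G.Path) : t l * t (G.s l) = t l := by
  rw [ht.2.2.1 l (G.s l) (s_eq_r_s l), σ.right_id, G.comp_id, one_smul]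

theorem t_s_mul_star (l : G.Path) : t (G.s l) * star (t l) = star (t l) := by
  rw [← (ht.1 _ (G.d_s l)).1, ← star_mul, ht.mul_t_s]

theorem star_mul_mul_star_self (l : G.Path) : star (t l) * (t l * star (t l)) = star (t l) := by
  rw [← mul_assoc, ht.2.2.2.1, ht.t_s_mul_star]

theorem mul_star_self_mul (l : G.Path) : t l * star (t l) * t l = t l := by
  rw [mul_assoc, ht.2.2.2.1, ht.mul_t_s]

theorem star_mul_eq_zero_of_MCE_eq_empty {ν η : G.Path} (h : G.MCE ν η = ∅) :
    star (t ν) * t η = 0 := by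
  have hq : t ν * star (t ν) * (t η * star (t η)) = 0 := by
    simpa using ht.2.2.2.2 ν η ∅ (by rw [h, Finset.coe_empty])
  calc star (t ν) * t η
      = star (t ν) * (t ν * star (t ν)) * (t η * star (t η) * t η) := by
        rw [ht.star_mul_mul_star_self, ht.mul_star_self_mul]
    _ = star (t ν) * (t ν * star (t ν) * (t η * star (t η))) * t η := by
        simp only [mul_assoc]
    _ = 0 := by rw [hq, mul_zero, zero_mul]

theorem mul_star_mul_mul_star {μ ν ζ : G.Path} (h : G.s ν = G.s ζ) :
    t μ * star (t ν) * (t ν * star (t ζ)) = t μ * star (t ζ) := by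
  rw [mul_assoc, ← mul_assoc (star (t ν)), ht.2.2.2.1, h, ht.t_s_mul_star]

theorem mul_star_ne_zero [CStarRing A] {μ ν : G.Path} (h : G.s μ = G.s ν)
    (hv : t (G.s ν) ≠ 0) : t μ * star (t ν) ≠ 0 := by
  intro h0
  have hν : t ν * star (t ν) = 0 := by
    rw [← ht.mul_star_mul_mul_star (μ := ν) h, h0, mul_zero]
  rw [CStarRing.mul_star_self_eq_zero_iff] at hν
  exact hv (by rw [← ht.2.2.2.1 ν, hν, mul_zero])

end IsTCK

end KGraph

theorem stmt12_general {k : ℕ} (G : KGraph k) (σ : G.Cocycle)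
    {A : Type*} [NonUnitalNormedRing A] [StarRing A] [CStarRing A]
    [NormedSpace ℂ A] [IsScalarTower ℂ A A] [SMulCommClass ℂ A A]
    [StarModule ℂ A] [CompleteSpace A]
    (t : G.Path → A) (ht : G.IsTCK σ t)
    (hnz : ∀ v : G.Path, G.IsVertex v → t v ≠ 0)
    (b : G.Path → (Fin k → ℤ)) (hb : ∀ l : G.Path, G.dZ l = b (G.s l) - b (G.r l))
    (n : Fin k → ℤ) :
    (∀ μ ν : G.Path, G.s μ = G.s ν → b (G.s μ) = n → t μ * star (t ν) ≠ 0) ∧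
    (∀ μ ν η ζ : G.Path, G.s μ = G.s ν → G.s η = G.s ζ →
      b (G.s μ) = n → b (G.s η) = n →
      ((ν = η → (t μ * star (t ν)) * (t η * star (t ζ)) = t μ * star (t ζ)) ∧
       (ν ≠ η → (t μ * star (t ν)) * (t η * star (t ζ)) = 0))) := by
  refine ⟨fun μ ν hs _ => ht.mul_star_ne_zero hs (hnz _ (G.d_s ν)),
    fun μ ν η ζ hμν hηζ hμ hη => ⟨?_, fun hne => ?_⟩⟩
  · rintro rfl
    exact ht.mul_star_mul_mul_star hηζ
  · have hMCE : G.MCE ν η = ∅ :=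
      KGraph.MCE_eq_empty_of_grading hb (by rw [← hμν, hμ, hη]) hne
    rw [mul_assoc, ← mul_assoc (star (t ν)), ht.star_mul_eq_zero_of_MCE_eq_empty hMCE,
      zero_mul, mul_zero]

/-- with a grading `b : Λ⁰ → ℤ^k` of the degree map, the
`t_μ t_ν*` with `b(s μ) = b(s ν) = n` are nonzero matrix units. -/
theorem stmt12 {k : ℕ} (G : KGraph k) (hFA : G.FinitelyAligned) (σ : G.Cocycle)
    {A : Type*} [NonUnitalNormedRing A] [StarRing A] [CStarRing A]
    [NormedSpace ℂ A] [IsScalarTower ℂ A A] [SMulCommClass ℂ A A]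
    [StarModule ℂ A] [CompleteSpace A]
    (t : G.Path → A) (ht : G.IsTCK σ t)
    (hnz : ∀ v : G.Path, G.IsVertex v → t v ≠ 0)
    (b : G.Path → (Fin k → ℤ)) (hb : ∀ l : G.Path, G.dZ l = b (G.s l) - b (G.r l))
    (n : Fin k → ℤ) :
    (∀ μ ν : G.Path, G.s μ = G.s ν → b (G.s μ) = n → t μ * star (t ν) ≠ 0) ∧
    (∀ μ ν η ζ : G.Path, G.s μ = G.s ν → G.s η = G.s ζ →
      b (G.s μ) = n → b (G.s η) = n →
      ((ν = η → (t μ * star (t ν)) * (t η * star (t ζ)) = t μ * star (t ζ)) ∧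
       (ν ≠ η → (t μ * star (t ν)) * (t η * star (t ζ)) = 0))) :=
  stmt12_general G σ t ht hnz b hb n
end
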